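/- Let X := ℙ^{n_1} × ⋯ × ℙ^{n_k} with k ≥ 2 and all n_i ≥ 1. Fix (a_1,…,a_k) ∈ ℕ^k and let Z ⊂ X be a zero-dimensional closed subscheme with h^1(X, I_Z(a_1,…,a_k)) = 0; set E := Z_red. Fix (c_1,…,c_k) ∈ ℕ^k. (a) If for some i ∈ {1,…,k} one has c_j ≥ a_j for all j ≠ i and c_i > a_i, then the linear system |I_Z(c_1,…,c_k)| has no base points outside π_i^{-1}(π_i(E)). (b) If c_i > a_i for all i, then no point of X \\ E is a base point of |I_Z(c_1,…,c_k)|. -/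

import Mathlib

/-!
Core framework: a concrete algebraic model of the multiprojective space
`X = ℙ^{n 0} × ⋯ × ℙ^{n (k-1)}` over a field `K`, via its multihomogeneous
coordinate ring `R = K[x_{ij}]`.
-/

open MvPolynomial Module
open scoped TensorProduct
set_option synthInstance.maxHeartbeats 1000000
set_option maxHeartbeats 1000000

namespace MultiProjPaper

variable (K : Type) [Field K] (k : ℕ) (n : Fin k → ℕ)

/-- Index type of the variables `x_{ij}`, `i = 1, …, k`, `0 ≤ j ≤ n i`. -/
abbrev MPIdx := Σ i : Fin k, Fin (n i + 1)

/-- The multihomogeneous coordinate ring `R = K[x_{ij}]` of the multiprojective space. -/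
abbrev MPR := MvPolynomial (MPIdx k n) K

/-- The weight of the variable `x_{ij}` is the multiindex `ε_i`. -/
def mpWeight : MPIdx k n → (Fin k → ℕ) := fun x => Pi.single x.1 1

/-- The space of multihomogeneous polynomials of multidegree `a`, i.e. `H^0(X, O_X(a))`. -/
noncomputable def mcomp (a : Fin k → ℕ) : Submodule K (MPR K k n) :=
  weightedHomogeneousSubmodule K (mpWeight k n) a

/-- A (representative of a) point of `X`: a tuple of nonzero vectors. -/
structure MPPoint where
  v : ∀ i : Fin k, Fin (n i + 1) → K
  nz : ∀ i, v i ≠ 0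

/-- Evaluation of a polynomial at (a representative of) a point. -/
noncomputable def MPPoint.ev (P : MPPoint K k n) (f : MPR K k n) : K :=
  MvPolynomial.eval (fun x : MPIdx k n => P.v x.1 x.2) f

/-- Evaluation at a scaling (by `lam i` on the `i`-th group of variables) of a point. -/
noncomputable def coneEval (lam : Fin k → K) (P : MPPoint K k n) (f : MPR K k n) : K :=
  MvPolynomial.eval (fun x : MPIdx k n => lam x.1 * P.v x.1 x.2) f

/-- The (multihomogeneous, saturated) vanishing ideal of a set of points of `X`:
all polynomials vanishing on the affine multicone over the set. -/
noncomputable def vanIdeal (S : Set (MPPoint K k n)) : Ideal (MPR K k n) where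
  carrier := {f | ∀ P ∈ S, ∀ lam : Fin k → K, coneEval K k n lam P f = 0}
  add_mem' := by
    intro f g hf hg P hP lam
    simp only [coneEval, map_add] at *
    rw [hf P hP lam, hg P hP lam, add_zero]
  zero_mem' := by intro P hP lam; simp [coneEval]
  smul_mem' := by
    intro c f hf P hP lam
    simp only [coneEval, smul_eq_mul, map_mul] at *
    rw [hf P hP lam, mul_zero]

/-- `H^0(X, 𝓘(a))` for the sheaf of ideals associated to a multihomogeneous ideal `I`:
the multidegree-`a` component of `I`. -/
noncomputable def secI (I : Ideal (MPR K k n)) (a : Fin k → ℕ) : Submodule K (MPR K k n) :=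
  mcomp K k n a ⊓ (Submodule.restrictScalars K I)

/-- `h^0(X, 𝓘(a))`. -/
noncomputable def h0I (I : Ideal (MPR K k n)) (a : Fin k → ℕ) : ℕ :=
  finrank K ↥(secI K k n I a)

/-- A zero-dimensional closed subscheme `Z ⊂ X`, modeled by its saturated multihomogeneous
ideal `I`, together with its degree (= length) `deg`: the multigraded Hilbert function of
`R/I` is eventually constant, equal to `deg`. -/
structure ZeroDimClosed where
  I : Ideal (MPR K k n)
  homog : ∀ f ∈ I, ∀ a : Fin k → ℕ, weightedHomogeneousComponent (mpWeight k n) a f ∈ I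
  saturated : ∀ f : MPR K k n,
    (∀ g : ∀ i : Fin k, Fin (n i + 1), (∏ i : Fin k, X (⟨i, g i⟩ : MPIdx k n)) * f ∈ I) → f ∈ I
  deg : ℕ
  hilb : ∃ d₀ : ℕ, ∀ a : Fin k → ℕ, (∀ i, d₀ ≤ a i) →
    finrank K ↥(secI K k n I a) + deg = finrank K ↥(mcomp K k n a)

/-- `h^0(X, 𝓘_Z(a))` for a zero-dimensional closed subscheme `Z`. -/
noncomputable def h0Z (Z : ZeroDimClosed K k n) (a : Fin k → ℕ) : ℕ := h0I K k n Z.I a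

/-- `h^1(X, 𝓘_Z(a))` for a zero-dimensional closed subscheme `Z` and `a ∈ ℕ^k`:
from the exact sequence `0 → 𝓘_Z(a) → O_X(a) → O_Z(a) → 0` and `h^1(O_X(a)) = 0`,
`h^1(𝓘_Z(a)) = deg Z - (h^0(O_X(a)) - h^0(𝓘_Z(a)))`. -/
noncomputable def h1Z (Z : ZeroDimClosed K k n) (a : Fin k → ℕ) : ℤ :=
  (Z.deg : ℤ) + (h0Z K k n Z a : ℤ) - (finrank K ↥(mcomp K k n a) : ℤ)

/-- "A general tuple of `s` points of `X` satisfies `P`": there is a nonzero polynomial `F`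
in the coordinates of the representative vectors of the `s` points (i.e. a nonempty Zariski
open subset of `X^s`) such that every tuple of points where `F` does not vanish satisfies `P`. -/
def GenericPts (s : ℕ) (P : (Fin s → MPPoint K k n) → Prop) : Prop :=
  ∃ F : MvPolynomial (Fin s × MPIdx k n) K, F ≠ 0 ∧
    ∀ T : Fin s → MPPoint K k n,
      MvPolynomial.eval (fun q : Fin s × MPIdx k n => (T q.1).v q.2.1 q.2.2) F ≠ 0 → P T

/-- "A general tuple of `d` vectors of the `K`-vector space `V` satisfies `P`":
there is a nonzero polynomial in the coordinates (w.r.t. a fixed basis) of the `d` vectors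
such that every tuple where it does not vanish satisfies `P`. -/
def GenericVecs (V : Type) [AddCommGroup V] [Module K V] (d : ℕ)
    (P : (Fin d → V) → Prop) : Prop :=
  ∃ F : MvPolynomial (Fin d × (Basis.ofVectorSpaceIndex K V)) K, F ≠ 0 ∧
    ∀ w : Fin d → V,
      MvPolynomial.eval
        (fun q : Fin d × (Basis.ofVectorSpaceIndex K V) =>
          (Basis.ofVectorSpace K V).repr (w q.1) q.2) F ≠ 0 → P w

/-- Multiplication `H^0(O_X(c)) ⊗ H^0(𝓘(a)) → H^0(𝓘(a + c))` as a bilinear map. -/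
noncomputable def mulSec (I : Ideal (MPR K k n)) (c a : Fin k → ℕ) :
    ↥(mcomp K k n c) →ₗ[K] ↥(secI K k n I a) →ₗ[K] ↥(secI K k n I (a + c)) :=
  LinearMap.mk₂ K
    (fun f g => ⟨(f : MPR K k n) * (g : MPR K k n), by
      constructor
      · have hf : IsWeightedHomogeneous (mpWeight k n) (f : MPR K k n) c := f.2
        have hg : IsWeightedHomogeneous (mpWeight k n) (g : MPR K k n) a := g.2.1
        have := hf.mul hg
        rw [add_comm c a] at this
        exact this
      · exact Ideal.mul_mem_left _ _ g.2.2⟩)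
    (fun f f' g => by apply Subtype.ext; simp [add_mul])
    (fun c' f g => by apply Subtype.ext; simp [smul_eq_mul]; try ring)
    (fun f g g' => by apply Subtype.ext; simp [mul_add])
    (fun c' f g => by apply Subtype.ext; simp [smul_eq_mul]; try ring)

/-- The multiplication map `μ : H^0(O_X(c)) ⊗ H^0(𝓘(a)) → H^0(𝓘(a+c))`. -/
noncomputable def mulMap (I : Ideal (MPR K k n)) (c a : Fin k → ℕ) :
    (↥(mcomp K k n c) ⊗[K] ↥(secI K k n I a)) →ₗ[K] ↥(secI K k n I (a + c)) :=
  TensorProduct.lift (mulSec K k n I c a)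

end MultiProjPaper

namespace MultiProjPaper


theorem exists_avoid {K V ι : Type*} [Field K] [Infinite K] [AddCommGroup V] [Module K V]
    (W : Submodule K V) (s : Finset ι) (S : ι → Submodule K V)
    (h : ∀ i ∈ s, ¬ W ≤ S i) : ∃ v ∈ W, ∀ i ∈ s, v ∉ S i := by
  classical
  induction s using Finset.induction_on with
  | empty => exact ⟨0, W.zero_mem, by simp⟩
  | @insert i s his ih =>
    obtain ⟨v, hvW, hv⟩ := ih (fun j hj => h j (Finset.mem_insert_of_mem hj))
    obtain ⟨w, hwW, hwi⟩ : ∃ w ∈ W, w ∉ S i := by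
      by_contra hc; push_neg at hc
      exact h i (Finset.mem_insert_self i s) hc
    have key : ∀ j ∈ insert i s, v ∉ S j ∨ w ∉ S j := by
      intro j hj
      rcases Finset.mem_insert.mp hj with rfl | hj'
      · exact Or.inr hwi
      · exact Or.inl (hv j hj')
    have hfin : (⋃ j ∈ (insert i s : Finset ι), {c : K | v + c • w ∈ S j}).Finite := by
      refine Set.Finite.biUnion (Finset.finite_toSet _) (fun j hj => ?_)
      rcases key j hj with hvj | hwj
      · by_cases hw : w ∈ S j
        · have : {c : K | v + c • w ∈ S j} = ∅ := by
            ext c; simp only [Set.mem_setOf_eq, Set.mem_empty_iff_false, iff_false]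
            intro hmem
            exact hvj (by simpa using (S j).sub_mem hmem ((S j).smul_mem c hw))
          simp [this]
        · refine Set.Subsingleton.finite ?_
          intro c₁ hc₁ c₂ hc₂
          by_contra hne
          refine hw ?_
          have h1 : (c₁ - c₂) • w ∈ S j := by
            have := (S j).sub_mem hc₁ hc₂
            simpa [sub_smul] using this
          have h2 := (S j).smul_mem (c₁ - c₂)⁻¹ h1
          rwa [smul_smul, inv_mul_cancel₀ (sub_ne_zero.mpr hne), one_smul] at h2
      · refine Set.Subsingleton.finite ?_
        intro c₁ hc₁ c₂ hc₂
        by_contra hne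
        refine hwj ?_
        have h1 : (c₁ - c₂) • w ∈ S j := by
          have := (S j).sub_mem hc₁ hc₂
          simpa [sub_smul] using this
        have h2 := (S j).smul_mem (c₁ - c₂)⁻¹ h1
        rwa [smul_smul, inv_mul_cancel₀ (sub_ne_zero.mpr hne), one_smul] at h2
    obtain ⟨c, hc⟩ := (hfin.infinite_compl).nonempty
    refine ⟨v + c • w, W.add_mem hvW (W.smul_mem c hwW), ?_⟩
    intro j hj hmem
    exact hc (Set.mem_biUnion hj hmem)



open Submodule

variable {R M : Type*} [CommRing R] [AddCommGroup M] [Module R M]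

theorem isAssociatedPrime_sub_or_quot [IsNoetherianRing R] (N : Submodule R M) {q : Ideal R}
    (hq : IsAssociatedPrime q M) :
    IsAssociatedPrime q ↥N ∨ IsAssociatedPrime q (M ⧸ N) := by
  obtain ⟨hqp, x, hx⟩ := isAssociatedPrime_iff.mp hq
  have hxq : ∀ r : R, r ∈ q ↔ r • x = 0 := by
    intro r; rw [hx, Submodule.mem_colon_singleton, Submodule.mem_bot]
  by_cases hcase : ∃ r : R, r • x ∈ N ∧ r • x ≠ 0
  · obtain ⟨r, hrN, hrne⟩ := hcase
    have hrq : r ∉ q := fun hr => hrne ((hxq r).mp hr)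
    left
    have key : ∀ a : R, a ∈ q ↔ a • (r • x) = 0 := by
      intro a
      constructor
      · intro ha
        rw [smul_comm, (hxq a).mp ha, smul_zero]
      · intro ha
        have h1 : (a * r) • x = 0 := by rw [mul_smul]; exact ha
        rcases hqp.mem_or_mem ((hxq _).mpr h1) with h | h
        · exact h
        · exact absurd h hrq
    refine isAssociatedPrime_iff.mpr ⟨hqp, ⟨⟨r • x, hrN⟩, ?_⟩⟩
    ext a
    rw [Submodule.mem_colon_singleton, Submodule.mem_bot]
    have hcoe : (a • (⟨r • x, hrN⟩ : ↥N) = 0) ↔ a • (r • x) = 0 := by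
      constructor
      · intro hb; have := congrArg (Subtype.val) hb; simpa using this
      · intro hb; apply Subtype.ext; simpa using hb
    rw [hcoe]
    exact key a
  · push_neg at hcase
    right
    refine isAssociatedPrime_iff.mpr ⟨hqp, ⟨N.mkQ x, ?_⟩⟩
    ext a
    rw [Submodule.mem_colon_singleton, Submodule.mem_bot, ← map_smul, Submodule.mkQ_apply,
      Submodule.Quotient.mk_eq_zero]
    constructor
    · intro ha
      rw [(hxq a).mp ha]; exact N.zero_mem
    · intro ha
      exact (hxq a).mpr (hcase a ha)

theorem associatedPrimes_finite_of_isNoetherian [IsNoetherianRing R] [Module.Finite R M] :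
    (associatedPrimes R M).Finite := by
  by_contra hinf
  have hN : IsNoetherian R M := isNoetherian_of_isNoetherianRing_of_finite R M
  set 𝒮 : Set (Submodule R M) := {N | (associatedPrimes R (M ⧸ N)).Infinite} with h𝒮
  have hbot : (⊥ : Submodule R M) ∈ 𝒮 := by
    have e : (M ⧸ (⊥ : Submodule R M)) ≃ₗ[R] M := Submodule.quotEquivOfEqBot _ rfl
    have := LinearEquiv.AssociatedPrimes.eq e
    simp only [h𝒮, Set.mem_setOf_eq, this]
    exact hinf
  obtain ⟨N, hN𝒮, hmax⟩ := (set_has_maximal_iff_noetherian.mpr hN) 𝒮 ⟨⊥, hbot⟩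
  have hNinf : (associatedPrimes R (M ⧸ N)).Infinite := hN𝒮
  have hnt : Nontrivial (M ⧸ N) := by
    by_contra hsub
    rw [not_nontrivial_iff_subsingleton] at hsub
    exact hNinf (by rw [associatedPrimes.eq_empty_of_subsingleton]; exact Set.finite_empty)
  obtain ⟨p, hp⟩ := associatedPrimes.nonempty R (M ⧸ N)
  obtain ⟨hpp, xb, hxb⟩ := isAssociatedPrime_iff.mp (AssociatedPrimes.mem_iff.mp hp)
  have hxbq : ∀ r : R, r ∈ p ↔ r • xb = 0 := by
    intro r; rw [hxb, Submodule.mem_colon_singleton, Submodule.mem_bot]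
  have hxbne : xb ≠ 0 := by
    intro h
    apply hpp.ne_top
    rw [Ideal.eq_top_iff_one, hxbq, h, smul_zero]
  obtain ⟨x, rfl⟩ := Submodule.mkQ_surjective N xb
  set N' : Submodule R M := N ⊔ (R ∙ x) with hN'
  have hxN : x ∉ N := by
    intro h
    exact hxbne (by rwa [Submodule.mkQ_apply, Submodule.Quotient.mk_eq_zero])
  have hlt : N < N' := by
    refine lt_of_le_of_ne le_sup_left ?_
    intro h
    exact hxN (h ▸ (le_sup_right : (R ∙ x) ≤ N') (Submodule.mem_span_singleton_self x))
  have hN'n : N' ∉ 𝒮 := fun hmem => hmax N' hmem hlt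
  have hfin' : (associatedPrimes R (M ⧸ N')).Finite := Set.not_infinite.mp hN'n
  set W : Submodule R (M ⧸ N) := R ∙ (N.mkQ x) with hW
  have hsubset : associatedPrimes R (M ⧸ N) ⊆ associatedPrimes R (M ⧸ N') ∪ {p} := by
    intro q hq
    rcases isAssociatedPrime_sub_or_quot W hq with hq1 | hq2
    · right
      obtain ⟨hqp, y, hy⟩ := isAssociatedPrime_iff.mp hq1
      have hyq : ∀ r : R, r ∈ q ↔ r • y = 0 := by
        intro r; rw [hy, Submodule.mem_colon_singleton, Submodule.mem_bot]
      obtain ⟨r, hr⟩ := Submodule.mem_span_singleton.mp y.2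
      have hyne : y ≠ 0 := by
        intro h
        apply hqp.ne_top
        rw [Ideal.eq_top_iff_one, hyq, h, smul_zero]
      have hrne : r • (N.mkQ x) ≠ 0 := by
        intro h
        apply hyne; apply Subtype.ext; rw [← hr]; simpa using h
      have hrp : r ∉ p := fun hmem => hrne ((hxbq r).mp hmem)
      have hqeq : q = p := by
        ext a
        rw [hyq, hxbq]
        constructor
        · intro ha
          have h1 : a • (r • N.mkQ x) = 0 := by
            have h2 : a • (y : M ⧸ N) = 0 := by
              have := congrArg (Subtype.val) ha; simpa using this
            rw [hr]; exact h2
          rw [smul_comm] at h1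
          -- r • (a • mkQ x) = 0
          have h3 : (r * a) ∈ p := by rw [hxbq, mul_smul]; exact h1
          rcases hpp.mem_or_mem h3 with h | h
          · exact absurd h hrp
          · rw [hxbq] at h; exact h
        · intro ha
          apply Subtype.ext
          have : a • (y : M ⧸ N) = 0 := by
            rw [← hr, smul_comm, ha, smul_zero]
          simpa using this
      exact Set.mem_singleton_iff.mpr hqeq
    · left
      have hWmap : Submodule.map N.mkQ N' = W := by
        rw [hN', Submodule.map_sup, Submodule.map_span]
        have h1 : Submodule.map N.mkQ N = ⊥ := by
          rw [eq_bot_iff, Submodule.map_le_iff_le_comap, Submodule.comap_bot, Submodule.ker_mkQ]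
        rw [h1, bot_sup_eq, hW, Set.image_singleton, Submodule.mkQ_apply]
      have e : ((M ⧸ N) ⧸ W) ≃ₗ[R] (M ⧸ N') := by
        rw [← hWmap]
        exact Submodule.quotientQuotientEquivQuotient N N' le_sup_left
      exact (LinearEquiv.AssociatedPrimes.eq e) ▸ hq2
  exact hNinf (Set.Finite.subset (hfin'.union (Set.finite_singleton p)) hsubset)


end MultiProjPaper

namespace MultiProjPaper

section Infra

variable {K : Type} [Field K] {k : ℕ} {n : Fin k → ℕ}

/-- single-variable notation -/
noncomputable abbrev xvar (K : Type) [Field K] {k : ℕ} {n : Fin k → ℕ}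
    (i : Fin k) (j : Fin (n i + 1)) : MPR K k n := X ⟨i, j⟩

lemma smul_single_one (i : Fin k) (m : ℕ) :
    m • (Pi.single i 1 : Fin k → ℕ) = Pi.single i m := by
  rw [← Pi.single_smul, smul_eq_mul, mul_one]

lemma sum_single_eq (m : Fin k → ℕ) :
    (∑ i : Fin k, (m i) • (Pi.single i 1 : Fin k → ℕ)) = m := by
  calc (∑ i : Fin k, (m i) • (Pi.single i 1 : Fin k → ℕ))
      = ∑ i : Fin k, Pi.single i (m i) := by
        refine Finset.sum_congr rfl fun i _ => smul_single_one i (m i)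
    _ = m := Finset.univ_sum_single m

lemma pow_isWeightedHomogeneous {w : MPIdx k n → (Fin k → ℕ)} {f : MPR K k n}
    {d : Fin k → ℕ} (hf : IsWeightedHomogeneous w f d) (e : ℕ) :
    IsWeightedHomogeneous w (f ^ e) (e • d) := by
  induction e with
  | zero => simpa using isWeightedHomogeneous_one K w
  | succ e ih =>
    have := ih.mul hf
    rw [← pow_succ] at this
    convert this using 1
    rw [succ_nsmul]

lemma prodPow_mem_mcomp (m : Fin k → ℕ) (g : ∀ i : Fin k, Fin (n i + 1)) :
    (∏ i : Fin k, (xvar K i (g i)) ^ (m i)) ∈ mcomp K k n m := by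
  have h : ∀ i ∈ Finset.univ, IsWeightedHomogeneous (mpWeight k n)
      ((xvar K i (g i)) ^ (m i)) ((m i) • (Pi.single i 1 : Fin k → ℕ)) := by
    intro i _
    exact pow_isWeightedHomogeneous (isWeightedHomogeneous_X K _ _) (m i)
  have := IsWeightedHomogeneous.prod Finset.univ _ _ h
  rw [sum_single_eq] at this
  exact this

lemma eval_prodPow (pt : MPIdx k n → K) (m : Fin k → ℕ) (g : ∀ i : Fin k, Fin (n i + 1)) :
    MvPolynomial.eval pt (∏ i : Fin k, (xvar K i (g i)) ^ (m i))
      = ∏ i : Fin k, (pt ⟨i, g i⟩) ^ (m i) := by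
  simp

/-- finite dimensionality of the graded pieces -/
lemma mcomp_le_restrict (b : Fin k → ℕ) :
    mcomp K k n b ≤ restrictTotalDegree (MPIdx k n) K (∑ i, b i) := by
  intro f hf
  rw [mem_restrictTotalDegree]
  refine Finset.sup_le fun d hd => ?_
  have hw : (Finsupp.weight (mpWeight k n)) d = b := hf (mem_support_iff.mp hd)
  have hsum : ∑ i : Fin k, ((Finsupp.weight (mpWeight k n)) d) i = ∑ i, b i := by rw [hw]
  have hL : ∑ i : Fin k, ((Finsupp.weight (mpWeight k n)) d) i
      = d.sum fun _ e => e := by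
    rw [Finsupp.weight_apply]
    rw [Finsupp.sum]
    rw [Finsupp.sum]
    have : ∀ i : Fin k, (∑ j ∈ d.support, d j • mpWeight k n j) i
        = ∑ j ∈ d.support, d j • (mpWeight k n j i) := by
      intro i
      simp [Finset.sum_apply]
    calc ∑ i : Fin k, (∑ j ∈ d.support, d j • mpWeight k n j) i
        = ∑ i : Fin k, ∑ j ∈ d.support, d j • (mpWeight k n j i) := by
          refine Finset.sum_congr rfl fun i _ => this i
      _ = ∑ j ∈ d.support, ∑ i : Fin k, d j • (mpWeight k n j i) := Finset.sum_comm
      _ = ∑ j ∈ d.support, d j := by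
          refine Finset.sum_congr rfl fun j _ => ?_
          rw [← Finset.smul_sum]
          have : ∑ i : Fin k, mpWeight k n j i = 1 := by
            simp [mpWeight, Finset.sum_pi_single']
          rw [this, smul_eq_mul, mul_one]
  rw [← hL, hsum]

instance mcomp_fd (b : Fin k → ℕ) : FiniteDimensional K ↥(mcomp K k n b) :=
  Submodule.finiteDimensional_of_le (mcomp_le_restrict b)

/-- saturation in a single slot -/
lemma slot_sat {I : Ideal (MPR K k n)}
    (hsat : ∀ f : MPR K k n,
      (∀ g : ∀ i : Fin k, Fin (n i + 1), (∏ i : Fin k, X (⟨i, g i⟩ : MPIdx k n)) * f ∈ I) → f ∈ I)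
    (i : Fin k) (f : MPR K k n) (h : ∀ j, xvar K i j * f ∈ I) : f ∈ I := by
  apply hsat
  intro g
  have : (∏ l : Fin k, X (⟨l, g l⟩ : MPIdx k n)) * f
      = (∏ l ∈ Finset.univ.erase i, X (⟨l, g l⟩ : MPIdx k n)) * (X (⟨i, g i⟩ : MPIdx k n) * f) := by
    rw [← Finset.mul_prod_erase Finset.univ _ (Finset.mem_univ i)]
    ring
  rw [this]
  exact Ideal.mul_mem_left _ _ (h (g i))

/-- associated primes of R/I contain I -/
lemma ass_le {I : Ideal (MPR K k n)} {p : Ideal (MPR K k n)}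
    (hp : p ∈ associatedPrimes (MPR K k n) ((MPR K k n) ⧸ I)) : I ≤ p := by
  obtain ⟨hpp, m, hm⟩ := isAssociatedPrime_iff.mp (AssociatedPrimes.mem_iff.mp hp)
  obtain ⟨f, rfl⟩ := Submodule.mkQ_surjective (I : Submodule (MPR K k n) (MPR K k n)) m
  intro a ha
  rw [hm, Submodule.mem_colon_singleton, Submodule.mem_bot, ← map_smul, Submodule.mkQ_apply,
    Submodule.Quotient.mk_eq_zero]
  exact Ideal.mul_mem_right _ _ ha

/-- associated primes do not contain a full slot of variables -/
lemma ass_not_slot {I : Ideal (MPR K k n)}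
    (hsat : ∀ f : MPR K k n,
      (∀ g : ∀ i : Fin k, Fin (n i + 1), (∏ i : Fin k, X (⟨i, g i⟩ : MPIdx k n)) * f ∈ I) → f ∈ I)
    {p : Ideal (MPR K k n)}
    (hp : p ∈ associatedPrimes (MPR K k n) ((MPR K k n) ⧸ I)) (i : Fin k) :
    ∃ j, xvar K i j ∉ p := by
  by_contra hc
  push_neg at hc
  obtain ⟨hpp, m, hm⟩ := isAssociatedPrime_iff.mp (AssociatedPrimes.mem_iff.mp hp)
  obtain ⟨f, rfl⟩ := Submodule.mkQ_surjective (I : Submodule (MPR K k n) (MPR K k n)) m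
  have hf : f ∈ I := by
    apply slot_sat hsat i
    intro j
    have := hc j
    rw [hm, Submodule.mem_colon_singleton, Submodule.mem_bot, ← map_smul, Submodule.mkQ_apply,
      Submodule.Quotient.mk_eq_zero] at this
    rwa [smul_eq_mul] at this
  have hm0 : (I : Submodule (MPR K k n) (MPR K k n)).mkQ f = 0 := by
    rw [Submodule.mkQ_apply, Submodule.Quotient.mk_eq_zero]; exact hf
  apply hpp.ne_top
  rw [hm, hm0, Ideal.eq_top_iff_one, Submodule.mem_colon_singleton, Submodule.mem_bot, smul_zero]

/-- non-zero-divisor from avoiding associated primes -/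
lemma nzd_of_avoid {I : Ideal (MPR K k n)} {L : MPR K k n}
    (h : ∀ p ∈ associatedPrimes (MPR K k n) ((MPR K k n) ⧸ I), L ∉ p) :
    ∀ f, L * f ∈ I → f ∈ I := by
  intro f hLf
  by_contra hf
  have hne : (I : Submodule (MPR K k n) (MPR K k n)).mkQ f ≠ 0 := by
    rw [Submodule.mkQ_apply, Ne, Submodule.Quotient.mk_eq_zero]; exact hf
  obtain ⟨p, hp, hle⟩ := exists_le_isAssociatedPrime_of_isNoetherianRing (MPR K k n) _ hne
  refine h p hp ?_
  apply hle
  rw [Submodule.mem_colon_singleton, Submodule.mem_bot, ← map_smul, Submodule.mkQ_apply,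
    Submodule.Quotient.mk_eq_zero]
  rwa [smul_eq_mul]

/-- a prime not containing a full slot has a nondegenerate zero -/
lemma exists_nondeg_zero [IsAlgClosed K] {p : Ideal (MPR K k n)} (hpp : p.IsPrime)
    (hslot : ∀ i : Fin k, ∃ j, xvar K i j ∉ p) :
    ∃ z : MPIdx k n → K, (∀ f ∈ p, MvPolynomial.eval z f = 0) ∧
      ∀ i : Fin k, ∃ j, z ⟨i, j⟩ ≠ 0 := by
  by_contra hc
  push_neg at hc
  choose g hg using hslot
  have hprod : (∏ i : Fin k, xvar K i (g i)) ∉ p := by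
    intro hmem
    rcases (Ideal.IsPrime.prod_mem_iff (hp := hpp)).mp hmem with ⟨i, _, hi⟩
    exact hg i hi
  apply hprod
  have hvan : (∏ i : Fin k, xvar K i (g i)) ∈ vanishingIdeal K (zeroLocus K p) := by
    intro z hz
    obtain ⟨i, hi⟩ := hc z (fun f hf => hz f hf)
    rw [map_prod]
    refine Finset.prod_eq_zero (Finset.mem_univ i) ?_
    rw [aeval_X]
    exact hi (g i)
  haveI := hpp
  rwa [MvPolynomial.IsPrime.vanishingIdeal_zeroLocus p] at hvan

/-- linear algebra: z is proportional to q if every functional killing q kills z -/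
lemma prop_of_perp {m : ℕ} (q z : Fin m → K) (hq : q ≠ 0)
    (h : ∀ t : Fin m → K, (∑ j, t j * q j) = 0 → (∑ j, t j * z j) = 0) :
    ∃ lam : K, z = lam • q := by
  obtain ⟨j₀, hj₀⟩ := Function.ne_iff.mp hq
  have hj₀' : q j₀ ≠ 0 := hj₀
  refine ⟨z j₀ / q j₀, ?_⟩
  funext j
  by_cases hjj : j = j₀
  · subst hjj
    simp only [Pi.smul_apply, smul_eq_mul]
    rw [div_mul_eq_mul_div, mul_div_assoc, div_self hj₀', mul_one]
  · have hperp : ∑ l, ((Pi.single j (q j₀) : Fin m → K) l - (Pi.single j₀ (q j) : Fin m → K) l) * q l = 0 := by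
      have h1 : ∑ l, (Pi.single j (q j₀) : Fin m → K) l * q l = q j₀ * q j := by
        rw [Finset.sum_eq_single_of_mem j (Finset.mem_univ j)]
        · rw [Pi.single_eq_same]
        · intro b _ hb
          rw [Pi.single_eq_of_ne hb, zero_mul]
      have h2 : ∑ l, (Pi.single j₀ (q j) : Fin m → K) l * q l = q j * q j₀ := by
        rw [Finset.sum_eq_single_of_mem j₀ (Finset.mem_univ j₀)]
        · rw [Pi.single_eq_same]
        · intro b _ hb
          rw [Pi.single_eq_of_ne hb, zero_mul]
      simp only [sub_mul]
      rw [Finset.sum_sub_distrib, h1, h2]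
      ring
    have := h _ hperp
    have h1 : ∑ l, (Pi.single j (q j₀) : Fin m → K) l * z l = q j₀ * z j := by
      rw [Finset.sum_eq_single_of_mem j (Finset.mem_univ j)]
      · rw [Pi.single_eq_same]
      · intro b _ hb
        rw [Pi.single_eq_of_ne hb, zero_mul]
    have h2 : ∑ l, (Pi.single j₀ (q j) : Fin m → K) l * z l = q j * z j₀ := by
      rw [Finset.sum_eq_single_of_mem j₀ (Finset.mem_univ j₀)]
      · rw [Pi.single_eq_same]
      · intro b _ hb
        rw [Pi.single_eq_of_ne hb, zero_mul]
    simp only [sub_mul] at this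
    rw [Finset.sum_sub_distrib, h1, h2, sub_eq_zero] at this
    simp only [Pi.smul_apply, smul_eq_mul]
    rw [div_mul_eq_mul_div, eq_div_iff hj₀']
    linear_combination this


/-- A linear form in the variables of slot `i`. -/
noncomputable def Lin (i : Fin k) (t : Fin (n i + 1) → K) : MPR K k n :=
  ∑ j, MvPolynomial.C (t j) * xvar K i j

lemma Lin_mem (i : Fin k) (t : Fin (n i + 1) → K) :
    Lin i t ∈ mcomp K k n (Pi.single i 1) := by
  refine Submodule.sum_mem _ fun j _ => ?_
  have hx : xvar K i j ∈ mcomp K k n (Pi.single i 1) := by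
    have := isWeightedHomogeneous_X K (mpWeight k n) (⟨i, j⟩ : MPIdx k n)
    exact this
  have := (mcomp K k n (Pi.single i 1)).smul_mem (t j) hx
  rwa [MvPolynomial.smul_eq_C_mul] at this

lemma eval_Lin (pt : MPIdx k n → K) (i : Fin k) (t : Fin (n i + 1) → K) :
    MvPolynomial.eval pt (Lin i t) = ∑ j, t j * pt ⟨i, j⟩ := by
  simp [Lin]

lemma ev_eq_eval (Q : MPPoint K k n) (f : MPR K k n) :
    MPPoint.ev K k n Q f = MvPolynomial.eval (fun x : MPIdx k n => Q.v x.1 x.2) f := rfl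

/-- Core geometric lemma: if every multidegree-`δ` form vanishing at `Q` lies in the
associated prime `p`, then there is a point of `E` whose `i`-th components, for `i` in the
support of `δ`, are proportional to those of `Q`. -/
lemma exists_E_point [IsAlgClosed K] {I : Ideal (MPR K k n)}
    (hsat : ∀ f : MPR K k n,
      (∀ g : ∀ i : Fin k, Fin (n i + 1), (∏ i : Fin k, X (⟨i, g i⟩ : MPIdx k n)) * f ∈ I) → f ∈ I)
    {p : Ideal (MPR K k n)}
    (hp : p ∈ associatedPrimes (MPR K k n) ((MPR K k n) ⧸ I))
    (Q : MPPoint K k n) (δ : Fin k → ℕ) (hδ : ∀ i, δ i ≤ 1)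
    (hple : ∀ F ∈ mcomp K k n δ, MPPoint.ev K k n Q F = 0 → F ∈ p) :
    ∃ P : MPPoint K k n, (∀ f ∈ I, MPPoint.ev K k n P f = 0) ∧
      ∀ i : Fin k, δ i ≠ 0 → ∃ lam : K, lam ≠ 0 ∧ Q.v i = lam • P.v i := by
  obtain ⟨z, hz, hznd⟩ := exists_nondeg_zero hp.isPrime (ass_not_slot hsat hp)
  choose jz hjz using hznd
  refine ⟨⟨fun i j => z ⟨i, j⟩, fun i h0 => hjz i (congrFun h0 (jz i))⟩, ?_, ?_⟩
  · intro f hf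
    have : MPPoint.ev K k n ⟨fun i j => z ⟨i, j⟩, fun i h0 => hjz i (congrFun h0 (jz i))⟩ f
        = MvPolynomial.eval z f := rfl
    rw [this]
    exact hz f (ass_le hp hf)
  · intro i hi
    have hδi : δ i = 1 := le_antisymm (hδ i) (Nat.one_le_iff_ne_zero.mpr hi)
    have hperp : ∀ t : Fin (n i + 1) → K,
        (∑ j, t j * Q.v i j) = 0 → (∑ j, t j * z ⟨i, j⟩) = 0 := by
      intro t ht
      set F : MPR K k n := Lin i t * ∏ l ∈ Finset.univ.erase i, (xvar K l (jz l)) ^ (δ l) with hF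
      have hFmem : F ∈ mcomp K k n δ := by
        have h1 : IsWeightedHomogeneous (mpWeight k n) (Lin i t) (Pi.single i 1) := Lin_mem i t
        have h2 : ∀ l ∈ Finset.univ.erase i, IsWeightedHomogeneous (mpWeight k n)
            ((xvar K l (jz l)) ^ (δ l)) ((δ l) • (Pi.single l 1 : Fin k → ℕ)) := fun l _ =>
          pow_isWeightedHomogeneous (isWeightedHomogeneous_X K _ _) (δ l)
        have h3 := h1.mul (IsWeightedHomogeneous.prod _ _ _ h2)
        have hdeg : (Pi.single i 1 : Fin k → ℕ)
            + ∑ l ∈ Finset.univ.erase i, (δ l) • (Pi.single l 1 : Fin k → ℕ) = δ := by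
          have h4 : (Pi.single i 1 : Fin k → ℕ) = (δ i) • (Pi.single i 1 : Fin k → ℕ) := by
            rw [hδi, one_smul]
          have h5 := Finset.add_sum_erase Finset.univ
            (fun l => (δ l) • (Pi.single l 1 : Fin k → ℕ)) (Finset.mem_univ i)
          rw [h4, h5, sum_single_eq]
        rwa [hdeg] at h3
      have hFQ : MPPoint.ev K k n Q F = 0 := by
        rw [ev_eq_eval, hF, map_mul, eval_Lin]
        simp only [ht, zero_mul]
      have hFz := hz F (hple F hFmem hFQ)
      rw [hF, map_mul, eval_Lin] at hFz
      have hne : MvPolynomial.eval z (∏ l ∈ Finset.univ.erase i, (xvar K l (jz l)) ^ (δ l)) ≠ 0 := by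
        rw [map_prod]
        refine Finset.prod_ne_zero_iff.mpr fun l _ => ?_
        rw [map_pow, eval_X]
        exact pow_ne_zero _ (hjz l)
      exact (mul_eq_zero.mp hFz).resolve_right hne
    obtain ⟨lam, hlam⟩ := prop_of_perp (Q.v i) (fun j => z ⟨i, j⟩) (Q.nz i) hperp
    have hlamne : lam ≠ 0 := by
      intro h0
      apply hjz i
      have := congrFun hlam (jz i)
      rw [h0] at this
      simpa using this
    refine ⟨lam⁻¹, inv_ne_zero hlamne, ?_⟩
    funext j
    have := congrFun hlam j
    simp only [Pi.smul_apply, smul_eq_mul] at this ⊢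
    rw [this]
    field_simp

/-- evaluation as a `K`-linear map -/
noncomputable def evLin (pt : MPIdx k n → K) : MPR K k n →ₗ[K] K where
  toFun := MvPolynomial.eval pt
  map_add' f g := by simp
  map_smul' t f := by simp [MvPolynomial.smul_eq_C_mul]

lemma mul_mem_mcomp {L f : MPR K k n} {δ b : Fin k → ℕ}
    (hL : L ∈ mcomp K k n δ) (hf : f ∈ mcomp K k n b) : L * f ∈ mcomp K k n (b + δ) := by
  have h : IsWeightedHomogeneous (mpWeight k n) (L * f) (δ + b) :=
    IsWeightedHomogeneous.mul hL hf
  rwa [add_comm δ b] at h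

/-- the degree-`b` sections of the ideal sheaf, inside `H⁰(O(b))` -/
noncomputable def SIb (I : Ideal (MPR K k n)) (b : Fin k → ℕ) :
    Submodule K ↥(mcomp K k n b) :=
  Submodule.comap (mcomp K k n b).subtype (secI K k n I b)

lemma mem_SIb {I : Ideal (MPR K k n)} {b : Fin k → ℕ} {f : ↥(mcomp K k n b)} :
    f ∈ SIb I b ↔ (f : MPR K k n) ∈ secI K k n I b := Iff.rfl

lemma finrank_quot (I : Ideal (MPR K k n)) (b : Fin k → ℕ) :
    finrank K (↥(mcomp K k n b) ⧸ SIb I b) + finrank K ↥(secI K k n I b)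
      = finrank K ↥(mcomp K k n b) := by
  have h1 := Submodule.finrank_quotient_add_finrank (SIb I b)
  have h2 : finrank K ↥(SIb I b) = finrank K ↥(secI K k n I b) := by
    have hle : secI K k n I b ≤ mcomp K k n b := inf_le_left
    exact (Submodule.comapSubtypeEquivOfLe hle).finrank_eq
  rw [← h2, h1]

/-- multiplication by a fixed homogeneous `L` as a linear map between graded pieces -/
noncomputable def mulHom {L : MPR K k n} {δ : Fin k → ℕ} (hL : L ∈ mcomp K k n δ)
    (b : Fin k → ℕ) : ↥(mcomp K k n b) →ₗ[K] ↥(mcomp K k n (b + δ)) where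
  toFun f := ⟨L * f.1, mul_mem_mcomp hL f.2⟩
  map_add' f g := by apply Subtype.ext; simp [mul_add]
  map_smul' t f := by apply Subtype.ext; simp [mul_smul_comm]

lemma mulHom_maps {I : Ideal (MPR K k n)} {L : MPR K k n} {δ : Fin k → ℕ}
    (hL : L ∈ mcomp K k n δ) (b : Fin k → ℕ) :
    SIb I b ≤ (SIb I (b + δ)).comap (mulHom hL b) := by
  intro f hf
  rw [Submodule.mem_comap, mem_SIb]
  exact ⟨mul_mem_mcomp hL f.2, Ideal.mul_mem_left _ _ ((mem_SIb.mp hf).2)⟩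

noncomputable def mulQ {I : Ideal (MPR K k n)} {L : MPR K k n} {δ : Fin k → ℕ}
    (hL : L ∈ mcomp K k n δ) (b : Fin k → ℕ) :
    (↥(mcomp K k n b) ⧸ SIb I b) →ₗ[K] (↥(mcomp K k n (b + δ)) ⧸ SIb I (b + δ)) :=
  Submodule.mapQ _ _ (mulHom hL b) (mulHom_maps hL b)

lemma mulQ_injective {I : Ideal (MPR K k n)} {L : MPR K k n} {δ : Fin k → ℕ}
    (hL : L ∈ mcomp K k n δ) (hnzd : ∀ f, L * f ∈ I → f ∈ I) (b : Fin k → ℕ) :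
    Function.Injective (mulQ (I := I) hL b) := by
  rw [← LinearMap.ker_eq_bot]
  rw [Submodule.eq_bot_iff]
  intro x hx
  obtain ⟨y, rfl⟩ := Submodule.mkQ_surjective _ x
  rw [LinearMap.mem_ker, Submodule.mkQ_apply, mulQ, Submodule.mapQ_apply,
    Submodule.Quotient.mk_eq_zero] at hx
  rw [Submodule.mkQ_apply, Submodule.Quotient.mk_eq_zero]
  rw [mem_SIb] at hx ⊢
  refine ⟨y.2, ?_⟩
  exact hnzd _ hx.2

lemma q_mono {I : Ideal (MPR K k n)} {L : MPR K k n} {δ : Fin k → ℕ}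
    (hL : L ∈ mcomp K k n δ) (hnzd : ∀ f, L * f ∈ I → f ∈ I) (b : Fin k → ℕ) :
    finrank K (↥(mcomp K k n b) ⧸ SIb I b)
      ≤ finrank K (↥(mcomp K k n (b + δ)) ⧸ SIb I (b + δ)) :=
  LinearMap.finrank_le_finrank_of_injective (mulQ_injective hL hnzd b)

lemma exists_good_L [IsAlgClosed K] [Infinite K] (Z : ZeroDimClosed K k n)
    (Q : MPPoint K k n) (δ : Fin k → ℕ) (hδ : ∀ i, δ i ≤ 1)
    (hQδ : ¬ ∃ P : MPPoint K k n, (∀ f ∈ Z.I, MPPoint.ev K k n P f = 0) ∧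
      ∀ i : Fin k, δ i ≠ 0 → ∃ lam : K, lam ≠ 0 ∧ Q.v i = lam • P.v i) :
    ∃ L, L ∈ mcomp K k n δ ∧ MPPoint.ev K k n Q L = 0 ∧ (∀ f, L * f ∈ Z.I → f ∈ Z.I) := by
  classical
  have hAPfin : (associatedPrimes (MPR K k n) ((MPR K k n) ⧸ Z.I)).Finite :=
    associatedPrimes_finite_of_isNoetherian
  set W : Submodule K (MPR K k n) :=
    mcomp K k n δ ⊓ LinearMap.ker (evLin (fun x : MPIdx k n => Q.v x.1 x.2)) with hW
  have havoid : ∀ p ∈ hAPfin.toFinset, ¬ W ≤ (Submodule.restrictScalars K (p : Ideal (MPR K k n))) := by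
    intro p hps hle
    rw [Set.Finite.mem_toFinset] at hps
    refine hQδ (exists_E_point Z.saturated hps Q δ hδ ?_)
    intro F hF hFQ
    exact hle ⟨hF, hFQ⟩
  obtain ⟨L, hLW, hLp⟩ := exists_avoid W hAPfin.toFinset _ havoid
  refine ⟨L, hLW.1, hLW.2, ?_⟩
  apply nzd_of_avoid
  intro p hp hmem
  exact hLp p (hAPfin.mem_toFinset.mpr hp) hmem

lemma exists_N [IsAlgClosed K] [Infinite K] (Z : ZeroDimClosed K k n) (m : Fin k → ℕ) :
    ∃ Nf, Nf ∈ mcomp K k n m ∧ (∀ f, Nf * f ∈ Z.I → f ∈ Z.I) := by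
  classical
  have hAPfin : (associatedPrimes (MPR K k n) ((MPR K k n) ⧸ Z.I)).Finite :=
    associatedPrimes_finite_of_isNoetherian
  have havoid : ∀ i : Fin k, ∀ p ∈ hAPfin.toFinset,
      ¬ mcomp K k n (Pi.single i 1) ≤ (Submodule.restrictScalars K (p : Ideal (MPR K k n))) := by
    intro i p hps hle
    rw [Set.Finite.mem_toFinset] at hps
    obtain ⟨j, hj⟩ := ass_not_slot Z.saturated hps i
    exact hj (hle (isWeightedHomogeneous_X K (mpWeight k n) (⟨i, j⟩ : MPIdx k n)))
  have hex := fun i : Fin k =>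
    exists_avoid (mcomp K k n (Pi.single i 1)) hAPfin.toFinset _ (havoid i)
  choose Ni hNimem hNip using hex
  refine ⟨∏ i, (Ni i) ^ (m i), ?_, ?_⟩
  · have h : ∀ i ∈ Finset.univ, IsWeightedHomogeneous (mpWeight k n)
        ((Ni i) ^ (m i)) ((m i) • (Pi.single i 1 : Fin k → ℕ)) := fun i _ =>
      pow_isWeightedHomogeneous (hNimem i) (m i)
    have := IsWeightedHomogeneous.prod Finset.univ _ _ h
    rwa [sum_single_eq] at this
  · apply nzd_of_avoid
    intro p hp hmem
    have hpp : p.IsPrime := hp.isPrime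
    rcases (Ideal.IsPrime.prod_mem_iff (hp := hpp)).mp hmem with ⟨i, _, hi⟩
    by_cases hm : m i = 0
    · rw [hm, pow_zero] at hi
      exact hpp.ne_top (Ideal.eq_top_of_unit_mem _ _ 1 hi (mul_one 1))
    · have := (hpp.pow_mem_iff_mem (m i) (Nat.pos_of_ne_zero hm)).mp hi
      exact hNip i p (hAPfin.mem_toFinset.mpr hp) this

lemma exists_sep [IsAlgClosed K] [Infinite K] (Z : ZeroDimClosed K k n) (a : Fin k → ℕ)
    (h1 : h1Z K k n Z a = 0) (Q : MPPoint K k n) (δ : Fin k → ℕ) (hδ : ∀ i, δ i ≤ 1)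
    (hQδ : ¬ ∃ P : MPPoint K k n, (∀ f ∈ Z.I, MPPoint.ev K k n P f = 0) ∧
      ∀ i : Fin k, δ i ≠ 0 → ∃ lam : K, lam ≠ 0 ∧ Q.v i = lam • P.v i) :
    ∃ f ∈ secI K k n Z.I (a + δ), MPPoint.ev K k n Q f ≠ 0 := by
  by_contra hcon
  push_neg at hcon
  obtain ⟨L, hLmem, hLQ, hLnzd⟩ := exists_good_L Z Q δ hδ hQδ
  choose jq hjqne using fun i : Fin k => Function.ne_iff.mp (Q.nz i)
  set Mel : MPR K k n := ∏ i, (xvar K i (jq i)) ^ ((a + δ) i) with hMel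
  have hMelmem : Mel ∈ mcomp K k n (a + δ) := prodPow_mem_mcomp _ _
  have hMelQ : MPPoint.ev K k n Q Mel ≠ 0 := by
    rw [ev_eq_eval, hMel, eval_prodPow]
    exact Finset.prod_ne_zero_iff.mpr fun i _ => pow_ne_zero _ (hjqne i)
  have hq_a : finrank K (↥(mcomp K k n a) ⧸ SIb Z.I a) = Z.deg := by
    have hfr := finrank_quot Z.I a
    have h1' : (Z.deg : ℤ) + (finrank K ↥(secI K k n Z.I a) : ℤ)
        - (finrank K ↥(mcomp K k n a) : ℤ) = 0 := h1
    omega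
  obtain ⟨d₀, hd₀⟩ := Z.hilb
  set B : Fin k → ℕ := fun i => max d₀ ((a + δ) i) with hB
  have hq_B : finrank K (↥(mcomp K k n B) ⧸ SIb Z.I B) = Z.deg := by
    have hfr := finrank_quot Z.I B
    have hh := hd₀ B (fun i => le_max_left _ _)
    omega
  set MelS : ↥(mcomp K k n (a + δ)) := ⟨Mel, hMelmem⟩ with hMelS
  set Φ : ((↥(mcomp K k n a) ⧸ SIb Z.I a) × K) →ₗ[K]
      (↥(mcomp K k n (a + δ)) ⧸ SIb Z.I (a + δ)) :=
    (mulQ (I := Z.I) hLmem a).coprod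
      (LinearMap.toSpanSingleton K _ ((SIb Z.I (a + δ)).mkQ MelS)) with hΦ
  have hΦinj : Function.Injective Φ := by
    rw [injective_iff_map_eq_zero]
    rintro ⟨x, t⟩ hx
    obtain ⟨y, rfl⟩ := Submodule.mkQ_surjective _ x
    rw [hΦ] at hx
    simp only [LinearMap.coprod_apply, LinearMap.toSpanSingleton_apply] at hx
    rw [mulQ, Submodule.mkQ_apply, Submodule.mapQ_apply] at hx
    rw [← Submodule.mkQ_apply, ← map_smul, ← map_add, Submodule.mkQ_apply,
      Submodule.Quotient.mk_eq_zero] at hx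
    have hmem : (L * (y : MPR K k n) + t • Mel) ∈ secI K k n Z.I (a + δ) := hx
    have hev := hcon _ hmem
    have hev2 : MPPoint.ev K k n Q (L * (y : MPR K k n) + t • Mel)
        = MPPoint.ev K k n Q L * MPPoint.ev K k n Q (y : MPR K k n)
          + t * MPPoint.ev K k n Q Mel := by
      simp only [ev_eq_eval, map_add, map_mul, MvPolynomial.smul_eq_C_mul, eval_C]
    rw [hev2, hLQ, zero_mul, zero_add] at hev
    have ht : t = 0 := by
      rcases mul_eq_zero.mp hev with h | h
      · exact h
      · exact absurd h hMelQ
    subst ht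
    have hy : (y : ↥(mcomp K k n a)) ∈ SIb Z.I a := by
      rw [zero_smul, add_zero] at hmem
      rw [mem_SIb]
      exact ⟨y.2, hLnzd _ hmem.2⟩
    have hz : (SIb Z.I a).mkQ y = 0 := by
      rw [Submodule.mkQ_apply, Submodule.Quotient.mk_eq_zero]; exact hy
    rw [hz]; rfl
  have hrank1 : Z.deg + 1 ≤ finrank K (↥(mcomp K k n (a + δ)) ⧸ SIb Z.I (a + δ)) := by
    have hfin := LinearMap.finrank_le_finrank_of_injective hΦinj
    rw [Module.finrank_prod, hq_a, Module.finrank_self] at hfin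
    exact hfin
  set m : Fin k → ℕ := fun i => B i - (a + δ) i with hm
  obtain ⟨Nf, hNmem, hNnzd⟩ := exists_N Z m
  have hsum : (a + δ) + m = B := by
    funext i
    simp only [hm, hB, Pi.add_apply]
    omega
  have hmono := q_mono (I := Z.I) hNmem hNnzd (a + δ)
  rw [hsum] at hmono
  omega

lemma secI_push {I : Ideal (MPR K k n)} {b c : Fin k → ℕ} (hbc : ∀ i, b i ≤ c i)
    (Q : MPPoint K k n) {f : MPR K k n} (hf : f ∈ secI K k n I b)
    (hfQ : MPPoint.ev K k n Q f ≠ 0) :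
    ∃ g ∈ secI K k n I c, MPPoint.ev K k n Q g ≠ 0 := by
  choose jq hjqne using fun i : Fin k => Function.ne_iff.mp (Q.nz i)
  refine ⟨f * ∏ i, (xvar K i (jq i)) ^ (c i - b i), ⟨?_, Ideal.mul_mem_right _ _ hf.2⟩, ?_⟩
  · have hmul := IsWeightedHomogeneous.mul (hf.1 : IsWeightedHomogeneous (mpWeight k n) f b)
      (prodPow_mem_mcomp (K := K) (fun i => c i - b i) jq)
    have hdeg : b + (fun i => c i - b i) = c := by
      funext i
      simp only [Pi.add_apply]
      have := hbc i
      omega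
    rwa [hdeg] at hmul
  · rw [ev_eq_eval, map_mul]
    refine mul_ne_zero hfQ ?_
    rw [eval_prodPow]
    exact Finset.prod_ne_zero_iff.mpr fun i _ => pow_ne_zero _ (hjqne i)

end Infra

end MultiProjPaper

namespace MultiProjPaper

/-- Lemma `f1`.
Let `X = ℙ^{n_1} × ⋯ × ℙ^{n_k}`, `k ≥ 2`, over an algebraically closed field `K` of
characteristic `0`. Fix `a ∈ ℕ^k` and a zero-dimensional closed subscheme `Z ⊂ X` with
`h^1(X, 𝓘_Z(a)) = 0`; let `E := Z_red` (the common zeros of `I_Z`). Fix `c ∈ ℕ^k`.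
(a) If `c_j ≥ a_j` for all `j ≠ i` and `c_i > a_i`, then `|𝓘_Z(c)|` has no base points
outside `π_i⁻¹(π_i(E))` (i.e. at every point `Q` whose `i`-th component is not
proportional to the `i`-th component of a point of `E`, some member does not vanish).
(b) If `c_i > a_i` for all `i`, then no point of `X \ E` is a base point of `|𝓘_Z(c)|`. -/
theorem statement15 (K : Type) [Field K] [IsAlgClosed K] [CharZero K]
    (k : ℕ) (hk : 2 ≤ k) (n : Fin k → ℕ) (hn : ∀ i, 1 ≤ n i)
    (a : Fin k → ℕ) (Z : ZeroDimClosed K k n)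
    (h1 : h1Z K k n Z a = 0) (c : Fin k → ℕ) :
    (∀ i : Fin k, (∀ j, j ≠ i → a j ≤ c j) → a i < c i →
      ∀ Q : MPPoint K k n,
        (¬ ∃ P : MPPoint K k n, (∀ f ∈ Z.I, MPPoint.ev K k n P f = 0) ∧
          ∃ lam : K, lam ≠ 0 ∧ Q.v i = lam • P.v i) →
        ∃ f ∈ secI K k n Z.I c, MPPoint.ev K k n Q f ≠ 0) ∧
    ((∀ i, a i < c i) →
      ∀ Q : MPPoint K k n,
        (¬ ∃ P : MPPoint K k n, (∀ f ∈ Z.I, MPPoint.ev K k n P f = 0) ∧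
          ∀ i : Fin k, ∃ lam : K, lam ≠ 0 ∧ Q.v i = lam • P.v i) →
        ∃ f ∈ secI K k n Z.I c, MPPoint.ev K k n Q f ≠ 0) := by
  haveI : Infinite K := Infinite.of_injective _ (Nat.cast_injective (R := K))
  constructor
  · intro i hji hci Q hQ
    have hδ : ∀ l : Fin k, (Pi.single i 1 : Fin k → ℕ) l ≤ 1 := by
      intro l
      rcases eq_or_ne l i with rfl | h
      · simp
      · simp [Pi.single_eq_of_ne h]
    have hQδ : ¬ ∃ P : MPPoint K k n, (∀ f ∈ Z.I, MPPoint.ev K k n P f = 0) ∧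
        ∀ l : Fin k, (Pi.single i 1 : Fin k → ℕ) l ≠ 0 →
          ∃ lam : K, lam ≠ 0 ∧ Q.v l = lam • P.v l := by
      rintro ⟨P, hPE, hPp⟩
      exact hQ ⟨P, hPE, hPp i (by simp)⟩
    obtain ⟨f, hf, hfQ⟩ := exists_sep Z a h1 Q (Pi.single i 1) hδ hQδ
    refine secI_push ?_ Q hf hfQ
    intro l
    rcases eq_or_ne l i with rfl | h
    · simp only [Pi.add_apply, Pi.single_eq_same]
      omega
    · simp only [Pi.add_apply, Pi.single_eq_of_ne h, add_zero]
      exact hji l h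
  · intro hci Q hQ
    have hδ : ∀ l : Fin k, (fun _ : Fin k => 1) l ≤ 1 := fun _ => le_refl 1
    have hQδ : ¬ ∃ P : MPPoint K k n, (∀ f ∈ Z.I, MPPoint.ev K k n P f = 0) ∧
        ∀ l : Fin k, (fun _ : Fin k => 1) l ≠ 0 →
          ∃ lam : K, lam ≠ 0 ∧ Q.v l = lam • P.v l := by
      rintro ⟨P, hPE, hPp⟩
      exact hQ ⟨P, hPE, fun l => hPp l one_ne_zero⟩
    obtain ⟨f, hf, hfQ⟩ := exists_sep Z a h1 Q (fun _ => 1) hδ hQδ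
    refine secI_push ?_ Q hf hfQ
    intro l
    simp only [Pi.add_apply]
    have := hci l
    omega

end MultiProjPaper
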